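/- arXiv:2006.10485 — 3 statements merged into one kernel-verified Lean document; each statement's English description precedes it below -/
import Mathlib

section
/- Suppose (Y_t)_{t≥0} is a square-integrable process with Var(Y_t - Y_s) = Var(Y_{t-s}) for all 0 ≤ s ≤ t, and there exist v > 0 and α > 0 with lim_{s→∞} Var(Y_s)/s^{2α} = v. Then for every a ≥ 1, lim_{s→∞} Corr(Y_s, Y_{as}) = (1 + a^{2α} - (a-1)^{2α}) / (2 a^α). -/
/-!
Write `V t = Var(Y t)`. By polarization, `Cov(Y s, Y (a s))` is half of
`V s + V (a s) - Var(Y (a s) - Y s)`, and the stationarity of increments turns the last term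
into `V ((a - 1) s)`. The correlation is therefore a function of `V s`, `V (a s)`, `V ((a - 1) s)`
that is homogeneous of degree zero, so all three may be divided by `s ^ (2 α)`; these rescaled
variances converge to `v`, `v a ^ (2 α)` and `v (a - 1) ^ (2 α)`.
-/

open MeasureTheory ProbabilityTheory Filter

/-- Covariance of two real random variables. -/
noncomputable def cov {Ω : Type*} [MeasurableSpace Ω] (μ : Measure Ω) (X Y : Ω → ℝ) : ℝ :=
  ∫ ω, (X ω - ∫ ω', X ω' ∂μ) * (Y ω - ∫ ω', Y ω' ∂μ) ∂μ

/-- Correlation coefficient. -/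
noncomputable def corr {Ω : Type*} [MeasurableSpace Ω] (μ : Measure Ω) (X Y : Ω → ℝ) : ℝ :=
  cov μ X Y / Real.sqrt (variance X μ * variance Y μ)

open Topology

/-- The correlation of `X` and `Y` in terms of `Var X`, `Var Y` and `Var (Y - X)`. -/
noncomputable def corrOfVariances (x y z : ℝ) : ℝ :=
  (x + y - z) / (2 * √(x * y))

lemma cov_eq_half_variance_sub {Ω : Type*} [MeasurableSpace Ω] {μ : Measure Ω}
    [IsFiniteMeasure μ] {X Y : Ω → ℝ} (hX : MemLp X 2 μ) (hY : MemLp Y 2 μ) :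
    cov μ X Y = (variance X μ + variance Y μ - variance (fun ω => Y ω - X ω) μ) / 2 := by
  change covariance X Y μ = _
  rw [variance_fun_sub hY hX, covariance_comm]
  ring

lemma corr_eq_corrOfVariances {Ω : Type*} [MeasurableSpace Ω] {μ : Measure Ω}
    [IsFiniteMeasure μ] {X Y : Ω → ℝ} (hX : MemLp X 2 μ) (hY : MemLp Y 2 μ) :
    corr μ X Y =
      corrOfVariances (variance X μ) (variance Y μ) (variance (fun ω => Y ω - X ω) μ) := by
  rw [corr, cov_eq_half_variance_sub hX hY, corrOfVariances, div_div]

lemma corrOfVariances_mul {c : ℝ} (hc : 0 < c) (x y z : ℝ) :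
    corrOfVariances (c * x) (c * y) (c * z) = corrOfVariances x y z := by
  have hsqrt : √(c * x * (c * y)) = c * √(x * y) := by
    rw [show c * x * (c * y) = c ^ 2 * (x * y) by ring, Real.sqrt_mul (by positivity),
      Real.sqrt_sq hc.le]
  rw [corrOfVariances, corrOfVariances, hsqrt, ← mul_add, ← mul_sub, mul_left_comm,
    mul_div_mul_left _ _ hc.ne']

lemma corrOfVariances_one_rpow_two_mul {a p : ℝ} (ha : 0 ≤ a) (z : ℝ) :
    corrOfVariances 1 (a ^ (2 * p)) z = (1 + a ^ (2 * p) - z) / (2 * a ^ p) := by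
  rw [corrOfVariances, one_mul, mul_comm 2 p, Real.rpow_mul ha, Real.rpow_two,
    Real.sqrt_sq (by positivity)]

lemma Filter.Tendsto.corrOfVariances {ι : Type*} {l : Filter ι} {f g h : ι → ℝ} {x y z : ℝ}
    (hf : Tendsto f l (𝓝 x)) (hg : Tendsto g l (𝓝 y)) (hh : Tendsto h l (𝓝 z))
    (hxy : 0 < x * y) :
    Tendsto (fun i => corrOfVariances (f i) (g i) (h i)) l (𝓝 (corrOfVariances x y z)) :=
  ((hf.add hg).sub hh).div ((hf.mul hg).sqrt.const_mul 2)
    (mul_pos two_pos (Real.sqrt_pos.2 hxy)).ne'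

lemma tendsto_comp_const_mul_div_rpow {f : ℝ → ℝ} {p v b : ℝ} (hp : 0 < p) (hf0 : f 0 = 0)
    (hb : 0 ≤ b) (hf : Tendsto (fun s => f s / s ^ p) atTop (𝓝 v)) :
    Tendsto (fun s => f (b * s) / s ^ p) atTop (𝓝 (v * b ^ p)) := by
  rcases hb.eq_or_lt with rfl | hb
  · simp [hf0, Real.zero_rpow hp.ne']
  refine ((hf.comp (tendsto_id.const_mul_atTop hb)).mul_const (b ^ p)).congr' ?_
  filter_upwards [eventually_gt_atTop 0] with s hs
  have hbs : (b * s) ^ p = b ^ p * s ^ p := Real.mul_rpow hb.le hs.le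
  simp only [Function.comp_apply, id, hbs]
  field_simp

/-- Aging for a process satisfying covariance-to-variance reduction whose variance grows
like `v * s ^ (2α)`. -/
theorem aging_of_variance_asymptotics {Ω : Type*} [MeasurableSpace Ω] (μ : Measure Ω)
    [IsProbabilityMeasure μ] (Y : ℝ → Ω → ℝ)
    (hmem : ∀ t : ℝ, 0 ≤ t → MemLp (Y t) 2 μ)
    (hstat : ∀ s t : ℝ, 0 ≤ s → s ≤ t →
      variance (fun ω => Y t ω - Y s ω) μ = variance (Y (t - s)) μ)
    (v α : ℝ) (hv : 0 < v) (hα : 0 < α)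
    (hlim : Tendsto (fun s : ℝ => variance (Y s) μ / s ^ (2 * α)) atTop (nhds v)) :
    ∀ a : ℝ, 1 ≤ a →
      Tendsto (fun s : ℝ => corr μ (Y s) (Y (a * s))) atTop
        (nhds ((1 + a ^ (2 * α) - (a - 1) ^ (2 * α)) / (2 * a ^ α))) := by
  intro a ha
  have hV0 : variance (Y 0) μ = 0 := by
    have hincr := hstat 0 0 le_rfl le_rfl
    simp only [sub_self] at hincr
    rw [← hincr]
    exact variance_zero μ
  have hVa := tendsto_comp_const_mul_div_rpow (f := fun t => variance (Y t) μ) (b := a)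
    (by positivity) hV0 (by linarith) hlim
  have hVa_sub_one := tendsto_comp_const_mul_div_rpow (f := fun t => variance (Y t) μ) (b := a - 1)
    (by positivity) hV0 (by linarith) hlim
  have hvalue : corrOfVariances v (v * a ^ (2 * α)) (v * (a - 1) ^ (2 * α)) =
      (1 + a ^ (2 * α) - (a - 1) ^ (2 * α)) / (2 * a ^ α) := by
    rw [← corrOfVariances_one_rpow_two_mul (by linarith), ← corrOfVariances_mul hv 1, mul_one]
  rw [← hvalue]
  refine (hlim.corrOfVariances hVa hVa_sub_one (by positivity)).congr' ?_
  filter_upwards [eventually_gt_atTop 0] with s hs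
  rw [corr_eq_corrOfVariances (hmem s hs.le) (hmem (a * s) (by positivity)),
    hstat s (a * s) hs.le (le_mul_of_one_le_left hs.le ha), div_eq_inv_mul, div_eq_inv_mul,
    div_eq_inv_mul, corrOfVariances_mul (by positivity), sub_one_mul]
end

section
/- Let B be a standard one-dimensional Brownian motion started at x ∈ ℝ, and let p(t,y) = (2πt)^{-1/2} e^{-y²/(2t)}. Then for all t ≥ 0, E[|B_t|] = |x| + ∫₀ᵗ p(s,x) ds. -/
/-!
Write `B_t = x + √t Z` with `Z` standard normal, density `φ` and distribution function `Φ`.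
Splitting `|y| = y + 2 max (-y) 0` and integrating `z φ(z) = -φ'(z)` over a half-line gives
the closed form `E|x + σZ| = x + 2σ φ(-x/σ) - 2x Φ(-x/σ)`, whose derivative in `σ` is
`2 φ(-x/σ)`. Hence `u(t) = E|x + √t Z|` has derivative `φ(-x/√t)/√t = p(t,x)` for `t > 0`; as `u` is
continuous with `u(0) = |x|`, the fundamental theorem of calculus gives the formula.
-/

open MeasureTheory ProbabilityTheory Real Filter Set Topology
open scoped NNReal

theorem hasDerivAt_setIntegral_Iic {E : Type*} [NormedAddCommGroup E] [NormedSpace ℝ E]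
    [CompleteSpace E] {f : ℝ → E} {a : ℝ} (hf : Integrable f)
    (hfa : ContinuousAt f a) : HasDerivAt (fun b ↦ ∫ z in Iic b, f z) (f a) a := by
  have hsplit :
      (fun b ↦ ∫ z in Iic b, f z) = fun b ↦ (∫ z in Iic a, f z) + ∫ z in a..b, f z := by
    ext b
    rw [← intervalIntegral.integral_Iic_sub_Iic hf.integrableOn hf.integrableOn, add_sub_cancel]
  rw [hsplit]
  exact (intervalIntegral.integral_hasDerivAt_right hf.intervalIntegrable
    hf.aestronglyMeasurable.stronglyMeasurableAtFilter hfa).const_add _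

namespace ProbabilityTheory

variable {μ : ℝ} {v : ℝ≥0}

theorem hasDerivAt_gaussianPDFReal (z : ℝ) :
    HasDerivAt (gaussianPDFReal μ v) (-((z - μ) / v) * gaussianPDFReal μ v z) z := by
  have h := ((((hasDerivAt_id z).sub_const μ).pow 2).neg.div_const (2 * (v : ℝ))).exp.const_mul
    (√(2 * π * v))⁻¹
  rw [gaussianPDFReal_def]
  refine h.congr_deriv ?_
  simp only [id, Pi.neg_apply, Pi.pow_apply]
  rcases eq_or_ne (v : ℝ) 0 with hv | hv
  · simp [hv]
  field_simp
  ring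

theorem tendsto_gaussianPDFReal_atBot (hv : v ≠ 0) :
    Tendsto (gaussianPDFReal μ v) atBot (𝓝 0) := by
  have hv' : (0 : ℝ) < 2 * v := by positivity
  have hsq : Tendsto (fun z : ℝ ↦ -(z - μ) ^ 2 / (2 * v)) atBot atBot := by
    have h := (tendsto_neg_atTop_atBot.comp ((tendsto_pow_atTop two_ne_zero).comp
      (tendsto_atTop_add_const_left _ μ tendsto_neg_atBot_atTop))).atBot_div_const hv'
    refine h.congr fun z ↦ ?_
    simp only [Function.comp]
    ring
  simpa [gaussianPDFReal_def] using (tendsto_exp_atBot.comp hsq).const_mul (√(2 * π * v))⁻¹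

theorem cdf_gaussianReal_eq_setIntegral (hv : v ≠ 0) (a : ℝ) :
    cdf (gaussianReal μ v) a = ∫ z in Iic a, gaussianPDFReal μ v z := by
  rw [cdf_eq_real, measureReal_def, gaussianReal_apply_eq_integral _ hv,
    ENNReal.toReal_ofReal
      (setIntegral_nonneg measurableSet_Iic fun z _ ↦ gaussianPDFReal_nonneg _ _ z)]

theorem hasDerivAt_cdf_gaussianReal (hv : v ≠ 0) (a : ℝ) :
    HasDerivAt (cdf (gaussianReal μ v)) (gaussianPDFReal μ v a) a := by
  have h := hasDerivAt_setIntegral_Iic (integrable_gaussianPDFReal μ v)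
    ((hasDerivAt_gaussianPDFReal (μ := μ) (v := v) a).continuousAt)
  exact h.congr_of_eventuallyEq (Eventually.of_forall (cdf_gaussianReal_eq_setIntegral hv))

theorem integrable_fun_id_gaussianReal : Integrable (fun z ↦ z) (gaussianReal μ v) :=
  (memLp_id_gaussianReal 1).integrable le_rfl

theorem setIntegral_gaussianReal_eq_setIntegral_mul (hv : v ≠ 0) {f : ℝ → ℝ} {s : Set ℝ}
    (hs : MeasurableSet s) :
    ∫ z in s, f z ∂gaussianReal μ v = ∫ z in s, gaussianPDFReal μ v z * f z := by
  rw [← integral_indicator hs, ← integral_indicator hs,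
    integral_gaussianReal_eq_integral_smul hv]
  congr 1 with z
  by_cases hz : z ∈ s <;> simp [hz]

theorem integrable_gaussianPDFReal_mul (hv : v ≠ 0) {f : ℝ → ℝ}
    (hf : Integrable f (gaussianReal μ v)) :
    Integrable fun z ↦ gaussianPDFReal μ v z * f z := by
  rw [gaussianReal_of_var_ne_zero _ hv, gaussianPDF_def,
    integrable_withDensity_iff_integrable_smul' (by fun_prop)
      (Eventually.of_forall fun _ ↦ ENNReal.ofReal_lt_top)] at hf
  simpa [ENNReal.toReal_ofReal (gaussianPDFReal_nonneg _ _ _)] using hf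

theorem setIntegral_Iic_sub_mean_gaussianReal (hv : v ≠ 0) (a : ℝ) :
    ∫ z in Iic a, (z - μ) ∂gaussianReal μ v = -(v * gaussianPDFReal μ v a) := by
  have hderiv : ∀ z, HasDerivAt (fun z ↦ -(v * gaussianPDFReal μ v z))
      (gaussianPDFReal μ v z * (z - μ)) z := fun z ↦ by
    refine ((hasDerivAt_gaussianPDFReal z).const_mul _).neg.congr_deriv ?_
    have : (v : ℝ) ≠ 0 := by exact_mod_cast hv
    field_simp
  have hint : Integrable fun z ↦ gaussianPDFReal μ v z * (z - μ) :=
    integrable_gaussianPDFReal_mul hv (integrable_fun_id_gaussianReal.sub (integrable_const μ))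
  rw [setIntegral_gaussianReal_eq_setIntegral_mul hv measurableSet_Iic,
    integral_Iic_of_hasDerivAt_of_tendsto (hderiv a).continuousAt.continuousWithinAt
      (fun z _ ↦ hderiv z) hint.integrableOn
      (by simpa using ((tendsto_gaussianPDFReal_atBot hv).const_mul (v : ℝ)).neg), sub_zero]

theorem integral_abs_const_add_mul_gaussianReal (x : ℝ) {σ : ℝ} (hσ : 0 < σ) :
    ∫ z, |x + σ * z| ∂gaussianReal 0 1
      = x + 2 * σ * gaussianPDFReal 0 1 (-x / σ) - 2 * x * cdf (gaussianReal 0 1) (-x / σ) := by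
  set a := -x / σ
  have hle_iff : ∀ z, x + σ * z ≤ 0 ↔ z ∈ Iic a := fun z ↦ by
    rw [mem_Iic, le_div_iff₀ hσ]
    constructor <;> intro h <;> linarith
  have habs :
      ∀ z, |x + σ * z| = (x + σ * z) + 2 * (Iic a).indicator (fun z ↦ -(x + σ * z)) z := by
    intro z
    by_cases hz : z ∈ Iic a
    · rw [indicator_of_mem hz, abs_of_nonpos ((hle_iff z).2 hz)]
      ring
    · rw [indicator_of_notMem hz, abs_of_pos (not_le.1 (mt (hle_iff z).1 hz))]
      ring
  have hlin : Integrable (fun z ↦ x + σ * z) (gaussianReal 0 1) :=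
    (integrable_const x).add (integrable_fun_id_gaussianReal.const_mul σ)
  have hmean : ∫ z, (x + σ * z) ∂gaussianReal 0 1 = x := by
    rw [integral_add (integrable_const x) (integrable_fun_id_gaussianReal.const_mul σ),
      integral_const, integral_const_mul, integral_id_gaussianReal]
    simp
  have hneg_part : ∫ z in Iic a, -(x + σ * z) ∂gaussianReal 0 1
      = σ * gaussianPDFReal 0 1 a - x * cdf (gaussianReal 0 1) a := by
    have hid : ∫ z in Iic a, z ∂gaussianReal 0 1 = -gaussianPDFReal 0 1 a := by
      simpa using setIntegral_Iic_sub_mean_gaussianReal (μ := 0) one_ne_zero a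
    have hfun : (fun z ↦ -(x + σ * z)) = fun z ↦ -σ * z - x := by
      ext z
      ring
    rw [hfun, integral_sub (integrable_fun_id_gaussianReal.const_mul _).integrableOn
        (integrable_const x), integral_const_mul, hid, setIntegral_const, cdf_eq_real]
    simp only [smul_eq_mul]
    ring
  have hind : Integrable ((Iic a).indicator fun z ↦ -(x + σ * z)) (gaussianReal 0 1) :=
    hlin.neg.indicator measurableSet_Iic
  simp_rw [habs]
  rw [integral_add hlin (hind.const_mul 2), integral_const_mul,
    integral_indicator measurableSet_Iic, hmean, hneg_part]
  ring

theorem gaussianReal_map_const_add_sqrt_mul (μ : ℝ) (v : ℝ≥0) :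
    (gaussianReal 0 1).map (fun z ↦ μ + √v * z) = gaussianReal μ v := by
  have hcomp : (fun z ↦ μ + √v * z) = (μ + ·) ∘ (√v * ·) := rfl
  rw [hcomp, ← Measure.map_map (by fun_prop) (by fun_prop), gaussianReal_map_const_mul,
    gaussianReal_map_const_add]
  congr 1
  · simp
  · ext
    simp

theorem continuous_integral_abs_const_add_mul_gaussianReal (x : ℝ) :
    Continuous fun σ ↦ ∫ z, |x + σ * z| ∂gaussianReal 0 1 := by
  refine continuous_iff_continuousAt.2 fun σ₀ ↦ continuousAt_of_dominated
    (bound := fun z ↦ |x| + (|σ₀| + 1) * |z|) (Eventually.of_forall fun σ ↦ by fun_prop) ?_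
    ((integrable_const _).add (integrable_fun_id_gaussianReal.abs.const_mul _))
    (Eventually.of_forall fun z ↦ by fun_prop)
  filter_upwards [Metric.ball_mem_nhds σ₀ one_pos] with σ hσ
  refine Eventually.of_forall fun z ↦ ?_
  have hσ' : |σ| ≤ |σ₀| + 1 := by
    have := abs_sub_abs_le_abs_sub σ σ₀
    rw [Metric.mem_ball, Real.dist_eq] at hσ
    linarith
  calc ‖|x + σ * z|‖ = |x + σ * z| := by simp
    _ ≤ |x| + |σ| * |z| := by rw [← abs_mul]; exact abs_add_le _ _
    _ ≤ |x| + (|σ₀| + 1) * |z| := by gcongr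

theorem hasDerivAt_integral_abs_const_add_mul_gaussianReal (x : ℝ) {σ : ℝ} (hσ : 0 < σ) :
    HasDerivAt (fun σ ↦ ∫ z, |x + σ * z| ∂gaussianReal 0 1)
      (2 * gaussianPDFReal 0 1 (-x / σ)) σ := by
  have harg : HasDerivAt (fun s ↦ -x / s) (x / σ ^ 2) σ := by
    simpa [div_eq_mul_inv] using (hasDerivAt_inv hσ.ne').const_mul (-x)
  have hpdf := (hasDerivAt_gaussianPDFReal (μ := 0) (v := 1) (-x / σ)).comp σ harg
  have hcdf := (hasDerivAt_cdf_gaussianReal (μ := 0) one_ne_zero (-x / σ)).comp σ harg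
  have hclosed :=
    ((((hasDerivAt_id σ).const_mul 2).mul hpdf).const_add x).sub (hcdf.const_mul (2 * x))
  have heq : (fun σ ↦ ∫ z, |x + σ * z| ∂gaussianReal 0 1) =ᶠ[𝓝 σ] fun s ↦
      x + 2 * s * gaussianPDFReal 0 1 (-x / s) - 2 * x * cdf (gaussianReal 0 1) (-x / s) := by
    filter_upwards [lt_mem_nhds hσ] with s hs
    exact integral_abs_const_add_mul_gaussianReal x hs
  refine (hclosed.congr_of_eventuallyEq heq).congr_deriv ?_
  simp only [Function.comp, id, NNReal.coe_one]
  field_simp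
  ring

theorem integral_abs_const_add_sqrt_mul_gaussianReal (x : ℝ) {t : ℝ} (ht : 0 ≤ t) :
    ∫ z, |x + √t * z| ∂gaussianReal 0 1
      = |x| + ∫ s in 0..t, gaussianPDFReal 0 1 (-x / √s) / √s := by
  have hcont : ContinuousOn (fun r ↦ ∫ z, |x + √r * z| ∂gaussianReal 0 1) (Icc 0 t) :=
    ((continuous_integral_abs_const_add_mul_gaussianReal x).comp continuous_sqrt).continuousOn
  have hderiv : ∀ r ∈ Ioo 0 t, HasDerivAt (fun r ↦ ∫ z, |x + √r * z| ∂gaussianReal 0 1)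
      (gaussianPDFReal 0 1 (-x / √r) / √r) r := fun r hr ↦ by
    refine ((hasDerivAt_integral_abs_const_add_mul_gaussianReal x (sqrt_pos.2 hr.1)).comp r
      (hasDerivAt_sqrt hr.1.ne')).congr_deriv ?_
    field_simp
  have hint := intervalIntegral.integrableOn_deriv_of_nonneg hcont hderiv
    fun r _ ↦ div_nonneg (gaussianPDFReal_nonneg _ _ _) (sqrt_nonneg r)
  rw [intervalIntegral.integral_eq_sub_of_hasDerivAt_of_le ht hcont hderiv
    ((intervalIntegrable_iff_integrableOn_Ioc_of_le ht).2 hint)]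
  simp

theorem gaussianPDFReal_zero_one_div_sqrt (y : ℝ) {s : ℝ} (hs : 0 < s) :
    gaussianPDFReal 0 1 (y / √s) / √s = (√(2 * π * s))⁻¹ * exp (-y ^ 2 / (2 * s)) := by
  simp only [gaussianPDFReal_def, NNReal.coe_one, mul_one, sub_zero]
  rw [sqrt_mul (by positivity) s, div_pow, sq_sqrt hs.le]
  field_simp

end ProbabilityTheory

/-- `B_t` is represented by its law `gaussianReal x t`. -/
theorem abs_moment_brownian (p : ℝ → ℝ → ℝ)
    (hp : ∀ t y : ℝ, 0 < t →
      p t y = (Real.sqrt (2 * Real.pi * t))⁻¹ * Real.exp (-y ^ 2 / (2 * t)))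
    (x : ℝ) :
    ∀ t : NNReal,
      (∫ z, |z| ∂(gaussianReal x t)) = |x| + ∫ s in Set.Ioc (0:ℝ) (t:ℝ), p s x := by
  intro t
  rw [← gaussianReal_map_const_add_sqrt_mul, integral_map (by fun_prop) (by fun_prop),
    integral_abs_const_add_sqrt_mul_gaussianReal x t.coe_nonneg,
    intervalIntegral.integral_of_le t.coe_nonneg]
  congr 1
  refine setIntegral_congr_fun measurableSet_Ioc fun s hs ↦ ?_
  rw [hp s x hs.1, gaussianPDFReal_zero_one_div_sqrt _ hs.1, neg_sq]
end

section
/- Let g(z, z̄) = min(z, z̄)·1_{z,z̄ ≥ 0} + min(−z, −z̄)·1_{z,z̄ ≤ 0} be the covariance of a two-sided Brownian motion, and let f_t(z) = p(t, x − z) be the heat kernel centered at x. Then ∫_ℝ f_t(z̄) (∫_ℝ f_t''(z) g(z, z̄) dz) dz̄ = p(t,x) − p(2t, 0). -/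
open MeasureTheory Filter Set Topology Real

/-!
For fixed `z'`, the function `z ↦ g z z'` is the clamp of `z` to `[0, z']` (for `z' ≥ 0`) or minus
the clamp of `z` to `[z', 0]` (for `z' ≤ 0`). Integrating `f_t''` against a clamp by parts on each
of the three pieces of the line gives `∫ f_t''(z) g(z, z') dz = f_t(0) - f_t(z')`; the boundary
terms at infinity vanish because `f_t'` and `f_t''` are integrable. The outer integral is then
`p(t, x) ∫ f_t - ∫ f_t² = p(t, x) - p(2t, 0)`, since `p(t, y)² = p(2t, 0) p(t/2, y)`.
-/

noncomputable def twoSidedBrownianCov (z z' : ℝ) : ℝ :=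
  (if 0 ≤ z ∧ 0 ≤ z' then min z z' else 0) + (if z ≤ 0 ∧ z' ≤ 0 then min (-z) (-z') else 0)

theorem twoSidedBrownianCov_of_nonneg {z' : ℝ} (h : 0 ≤ z') (z : ℝ) :
    twoSidedBrownianCov z z' = max 0 (min z z') := by
  unfold twoSidedBrownianCov
  split_ifs <;> grind

theorem twoSidedBrownianCov_of_nonpos {z' : ℝ} (h : z' ≤ 0) (z : ℝ) :
    twoSidedBrownianCov z z' = -max z' (min z 0) := by
  unfold twoSidedBrownianCov
  split_ifs <;> grind

section

variable {f f' f'' : ℝ → ℝ}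

theorem integral_mul_max_min_eq_sub (hf : ∀ z, HasDerivAt f (f' z) z)
    (hf' : ∀ z, HasDerivAt f' (f'' z) z) (hf'_int : Integrable f') (hf''_int : Integrable f'')
    {a b : ℝ} (hab : a ≤ b) :
    ∫ z, f'' z * max a (min z b) = f a - f b := by
  have htop : Tendsto f' atTop (𝓝 0) := tendsto_zero_of_hasDerivAt_of_integrableOn_Ioi (a := 0)
    (fun z _ => hf' z) hf''_int.integrableOn hf'_int.integrableOn
  have hbot : Tendsto f' atBot (𝓝 0) := tendsto_zero_of_hasDerivAt_of_integrableOn_Iic (a := 0)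
    (fun z _ => hf' z) hf''_int.integrableOn hf'_int.integrableOn
  have hint : Integrable fun z => f'' z * max a (min z b) :=
    hf''_int.mul_bdd (by fun_prop) (c := |a| + |b|) <| .of_forall fun z => abs_le.mpr
      ⟨by linarith [neg_abs_le a, abs_nonneg b, le_max_left a (min z b)],
       by linarith [le_abs_self b, abs_nonneg a, max_le hab (min_le_right z b)]⟩
  have hleft : ∫ z in Iic a, f'' z * max a (min z b) = a * f' a := by
    rw [setIntegral_congr_fun measurableSet_Iic (g := fun z => f'' z * a)
        fun z (hz : z ≤ a) => by simp [hz, hz.trans hab],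
      integral_mul_const, integral_Iic_of_hasDerivAt_of_tendsto' (f := f') (fun z _ => hf' z)
        hf''_int.integrableOn hbot]
    ring
  have hmid : ∫ z in Ioc a b, f'' z * max a (min z b) = (b * f' b - f b) - (a * f' a - f a) := by
    rw [setIntegral_congr_fun measurableSet_Ioc (g := fun z => f'' z * z)
        fun z (hz : z ∈ Ioc a b) => by simp [hz.1.le, hz.2], ← intervalIntegral.integral_of_le hab]
    refine intervalIntegral.integral_eq_sub_of_hasDerivAt (f := fun z => z * f' z - f z)
      (fun z _ => ?_) ?_
    · exact (((hasDerivAt_id' z).mul (hf' z)).sub (hf z)).congr_deriv (by ring)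
    · exact (hf''_int.integrableOn.mul_continuousOn continuousOn_id
        isCompact_uIcc).intervalIntegrable
  have hright : ∫ z in Ioi b, f'' z * max a (min z b) = -(b * f' b) := by
    rw [setIntegral_congr_fun measurableSet_Ioi (g := fun z => f'' z * b)
        fun z (hz : b < z) => by simp [hz.le, hab],
      integral_mul_const, integral_Ioi_of_hasDerivAt_of_tendsto' (f := f') (fun z _ => hf' z)
        hf''_int.integrableOn htop]
    ring
  rw [← intervalIntegral.integral_Iic_add_Ioi hint.integrableOn hint.integrableOn,
    ← Ioc_union_Ioi_eq_Ioi hab, setIntegral_union Ioc_disjoint_Ioi_same measurableSet_Ioi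
      hint.integrableOn hint.integrableOn, hleft, hmid, hright]
  ring

theorem integral_mul_twoSidedBrownianCov (hf : ∀ z, HasDerivAt f (f' z) z)
    (hf' : ∀ z, HasDerivAt f' (f'' z) z) (hf'_int : Integrable f') (hf''_int : Integrable f'')
    (z' : ℝ) : ∫ z, f'' z * twoSidedBrownianCov z z' = f 0 - f z' := by
  rcases le_total 0 z' with h | h
  · simp_rw [twoSidedBrownianCov_of_nonneg h]
    exact integral_mul_max_min_eq_sub hf hf' hf'_int hf''_int h
  · simp_rw [twoSidedBrownianCov_of_nonpos h, mul_neg, integral_neg,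
      integral_mul_max_min_eq_sub hf hf' hf'_int hf''_int h, neg_sub]

end

noncomputable def heatKernel (t y : ℝ) : ℝ := (√(2 * π * t))⁻¹ * exp (-y ^ 2 / (2 * t))

variable {t : ℝ}

theorem hasDerivAt_heatKernel_sub (x z : ℝ) :
    HasDerivAt (fun z => heatKernel t (x - z)) ((x - z) / t * heatKernel t (x - z)) z := by
  have hsq : HasDerivAt (fun z => -(x - z) ^ 2 / (2 * t)) ((x - z) / t) z :=
    ((((hasDerivAt_id' z).const_sub x).pow 2).neg.div_const _).congr_deriv (by ring)
  exact (hsq.exp.const_mul _).congr_deriv (by unfold heatKernel; ring)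

theorem hasDerivAt_div_mul_heatKernel_sub (x z : ℝ) :
    HasDerivAt (fun z => (x - z) / t * heatKernel t (x - z))
      ((((x - z) / t) ^ 2 - t⁻¹) * heatKernel t (x - z)) z :=
  ((((hasDerivAt_id' z).const_sub x).div_const t).mul (hasDerivAt_heatKernel_sub x z)).congr_deriv
    (by ring)

theorem integrable_pow_mul_heatKernel (ht : 0 < t) (n : ℕ) :
    Integrable fun y => y ^ n * heatKernel t y := by
  have h := (integrable_rpow_mul_exp_neg_mul_sq (b := (2 * t)⁻¹) (by positivity)
    (s := n) (by linarith [n.cast_nonneg (α := ℝ)])).const_mul (√(2 * π * t))⁻¹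
  refine h.congr (.of_forall fun y => ?_)
  simp only [rpow_natCast, heatKernel]
  ring_nf

theorem integral_heatKernel (ht : 0 < t) : ∫ y, heatKernel t y = 1 := by
  have hexp : ∫ y, exp (-y ^ 2 / (2 * t)) = √(2 * π * t) := by
    convert integral_gaussian (2 * t)⁻¹ using 3 with y
    · ring_nf
    · field_simp
  simp only [heatKernel]
  rw [integral_const_mul, hexp, inv_mul_cancel₀ (by positivity)]

theorem heatKernel_sq (ht : 0 < t) (y : ℝ) :
    heatKernel t y ^ 2 = heatKernel (2 * t) 0 * heatKernel (t / 2) y := by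
  have hsqrt : (√(2 * π * t))⁻¹ ^ 2 = (√(2 * π * (2 * t)))⁻¹ * (√(2 * π * (t / 2)))⁻¹ := by
    rw [inv_pow, sq_sqrt (by positivity), ← mul_inv, ← sqrt_mul (by positivity),
      show 2 * π * (2 * t) * (2 * π * (t / 2)) = (2 * π * t) ^ 2 by ring, sqrt_sq (by positivity)]
  have hexp : exp (-y ^ 2 / (2 * t)) ^ 2 =
      exp (-0 ^ 2 / (2 * (2 * t))) * exp (-y ^ 2 / (2 * (t / 2))) := by
    rw [sq, ← exp_add, ← exp_add]
    congr 1
    field_simp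
    ring
  rw [heatKernel, heatKernel, heatKernel, mul_pow, hsqrt, hexp]
  ring

theorem deriv_deriv_heatKernel_sub (x : ℝ) : deriv (deriv fun z => heatKernel t (x - z)) =
    fun z => (((x - z) / t) ^ 2 - t⁻¹) * heatKernel t (x - z) := by
  have hderiv : deriv (fun z => heatKernel t (x - z)) =
      fun z => (x - z) / t * heatKernel t (x - z) :=
    funext fun z => (hasDerivAt_heatKernel_sub x z).deriv
  exact hderiv ▸ funext fun z => (hasDerivAt_div_mul_heatKernel_sub x z).deriv

theorem integrable_div_mul_heatKernel_sub (ht : 0 < t) (x : ℝ) :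
    Integrable fun z => (x - z) / t * heatKernel t (x - z) :=
  (((integrable_pow_mul_heatKernel ht 1).const_mul t⁻¹).comp_sub_left x).congr
    (.of_forall fun z => by ring)

theorem integrable_sq_sub_inv_mul_heatKernel_sub (ht : 0 < t) (x : ℝ) :
    Integrable fun z => (((x - z) / t) ^ 2 - t⁻¹) * heatKernel t (x - z) :=
  ((((integrable_pow_mul_heatKernel ht 2).const_mul (t⁻¹ ^ 2)).sub
    ((integrable_pow_mul_heatKernel ht 0).const_mul t⁻¹)).comp_sub_left x).congr
    (.of_forall fun z => by simp only [Pi.sub_apply]; ring)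

theorem integrable_heatKernel_sub (ht : 0 < t) (x : ℝ) :
    Integrable fun z => heatKernel t (x - z) := by
  simpa using (integrable_pow_mul_heatKernel ht 0).comp_sub_left x

theorem integral_heatKernel_sub (ht : 0 < t) (x : ℝ) : ∫ z, heatKernel t (x - z) = 1 := by
  rw [integral_sub_left_eq_self (fun y => heatKernel t y), integral_heatKernel ht]

theorem integrable_heatKernel_sub_sq (ht : 0 < t) (x : ℝ) :
    Integrable fun z => heatKernel t (x - z) ^ 2 := by
  simp_rw [heatKernel_sq ht]
  exact (integrable_heatKernel_sub (half_pos ht) x).const_mul _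

theorem integral_heatKernel_sub_sq (ht : 0 < t) (x : ℝ) :
    ∫ z, heatKernel t (x - z) ^ 2 = heatKernel (2 * t) 0 := by
  simp_rw [heatKernel_sq ht]
  rw [integral_const_mul, integral_heatKernel_sub (half_pos ht), mul_one]

/-- With `g` the covariance of a two-sided Brownian motion and `f_t(z) = p(t, x − z)` the
heat kernel centered at `x`, one has
`∫ f_t(z̄) (∫ f_t''(z) g(z,z̄) dz) dz̄ = p(t,x) − p(2t,0)`. -/
theorem heat_kernel_bm_covariance_identity (p : ℝ → ℝ → ℝ)
    (hp : ∀ t y : ℝ, 0 < t →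
      p t y = (Real.sqrt (2 * Real.pi * t))⁻¹ * Real.exp (-y ^ 2 / (2 * t)))
    (g : ℝ → ℝ → ℝ)
    (hg : ∀ z z' : ℝ, g z z' =
      (if 0 ≤ z ∧ 0 ≤ z' then min z z' else 0) +
      (if z ≤ 0 ∧ z' ≤ 0 then min (-z) (-z') else 0))
    (t x : ℝ) (ht : 0 < t) :
    (∫ z', p t (x - z') * ∫ z, deriv (deriv (fun w => p t (x - w))) z * g z z') =
      p t x - p (2 * t) 0 := by
  have hpt : p t = heatKernel t := funext fun y => hp t y ht
  have hp2t : p (2 * t) 0 = heatKernel (2 * t) 0 := hp _ _ (by positivity)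
  have hgcov : g = twoSidedBrownianCov := funext₂ hg
  have hinner (z' : ℝ) : ∫ z, (((x - z) / t) ^ 2 - t⁻¹) * heatKernel t (x - z) *
      twoSidedBrownianCov z z' = heatKernel t x - heatKernel t (x - z') := by
    simpa using integral_mul_twoSidedBrownianCov (hasDerivAt_heatKernel_sub x)
      (hasDerivAt_div_mul_heatKernel_sub x) (integrable_div_mul_heatKernel_sub ht x)
      (integrable_sq_sub_inv_mul_heatKernel_sub ht x) z'
  simp only [hpt, hp2t, hgcov, deriv_deriv_heatKernel_sub, hinner, mul_sub, ← sq]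
  rw [integral_sub ((integrable_heatKernel_sub ht x).mul_const _)
      (integrable_heatKernel_sub_sq ht x), integral_mul_const, integral_heatKernel_sub ht,
    one_mul, integral_heatKernel_sub_sq ht]
end
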